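/- arXiv:2508.07535 — 2 statements merged into one kernel-verified Lean document; each statement's English description precedes it below -/
import Mathlib

section
/- Suppose f ∈ C²(ℝ^d) and α > 0. For (x₀, ω) ∈ Θ and t ∈ ℕ, let I_t(x₀, ω) = 1 if |e_{i_t}ᵀ ∇f(x_t(ω))| ≥ (1/√d) ‖∇f(x_t(ω))‖ and I_t(x₀, ω) = 0 otherwise. Then the set Θ₁ := {(x₀, ω) ∈ Θ : liminf_{t→∞} (1/t) Σ_{s=0}^{t−1} I_s(x₀, ω) ≥ 1/d} satisfies μ(Θ \ Θ₁) = 0. -/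
open MeasureTheory Filter Topology

noncomputable section

/-- Iterates of randomized coordinate gradient descent with step size `α`:
`x_{t+1} = x_t - α e_{i_t} ∂_{i_t} f(x_t)`. -/
def rcgdIter (d : ℕ) (f : EuclideanSpace ℝ (Fin d) → ℝ) (α : ℝ)
    (x₀ : EuclideanSpace ℝ (Fin d)) (ω : ℕ → Fin d) : ℕ → EuclideanSpace ℝ (Fin d)
  | 0 => x₀
  | t + 1 =>
      rcgdIter d f α x₀ ω t -
        (α * gradient f (rcgdIter d f α x₀ ω t) (ω t)) • EuclideanSpace.single (ω t) (1 : ℝ)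

/-- The indicator `I_t(x₀, ω)`, equal to `1` when the sampled coordinate of the gradient at the
`t`-th iterate is at least `(1/√d) ‖∇f(x_t)‖` in absolute value, and `0` otherwise. -/
def goodStepIndicator (d : ℕ) (f : EuclideanSpace ℝ (Fin d) → ℝ) (α : ℝ)
    (x₀ : EuclideanSpace ℝ (Fin d)) (ω : ℕ → Fin d) (t : ℕ) : ℝ :=
  if (1 / Real.sqrt d) * ‖gradient f (rcgdIter d f α x₀ ω t)‖ ≤
      |gradient f (rcgdIter d f α x₀ ω t) (ω t)| then 1 else 0

/-!
At every point some coordinate carries at least a `1/√d` share of the gradient norm, so given the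
past, step `t` is good with probability `p_t ≥ 1/d`. The centred sums `M_t = ∑_{s<t} (I_s - p_s)`
form a martingale with increments in `[-1, 1]`, hence `𝔼[M_t²] ≤ t`. Chebyshev and Borel–Cantelli
along the squares `t = r²` give `M_{r²} / r² → 0` almost surely, and the bounded increments fill
the gaps between consecutive squares; so `liminf (1/t) ∑_{s<t} I_s ≥ 1/d` for every `x₀` and almost
every `ω`. Fubini concludes, the event being measurable because `∇f` is measurable for any `f`.

Since `ℙ` is only known on cylinders, `𝔼[M_t²]` is computed as an average over all words of
length `t`.
-/

open Finset ENNReal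

lemma tendsto_natSqrt_atTop : Tendsto Nat.sqrt atTop atTop :=
  tendsto_atTop_atTop.2 fun b => ⟨b * b, fun _ ht => Nat.le_sqrt.2 ht⟩

lemma abs_sum_range_sub_sum_range_le {D : ℕ → ℝ} (hD : ∀ s, |D s| ≤ 1) {a b : ℕ}
    (hab : a ≤ b) : |∑ s ∈ range b, D s - ∑ s ∈ range a, D s| ≤ b - a := by
  rw [← sum_Ico_eq_sub _ hab, ← Nat.cast_sub hab, ← Nat.card_Ico]
  simpa using (abs_sum_le_sum_abs D (Ico a b)).trans (sum_le_sum fun s _ => hD s)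

/-- Between `r²` and `(r + 1)²` a sum with terms in `[-1, 1]` moves by at most `2r`, which is
negligible against `r²`. -/
lemma tendsto_sum_range_div_of_tendsto_sq {D : ℕ → ℝ} (hD : ∀ s, |D s| ≤ 1)
    (hsq : Tendsto (fun r : ℕ => (∑ s ∈ range (r ^ 2), D s) / (r ^ 2 : ℕ)) atTop (𝓝 0)) :
    Tendsto (fun t : ℕ => (∑ s ∈ range t, D s) / t) atTop (𝓝 0) := by
  set S : ℕ → ℝ := fun t => ∑ s ∈ range t, D s
  have hbound : ∀ᶠ t in atTop,
      ‖S t / t‖ ≤ |S (Nat.sqrt t ^ 2) / (Nat.sqrt t ^ 2 : ℕ)| + 2 / Nat.sqrt t := by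
    filter_upwards [eventually_ge_atTop 1] with t ht
    set r := Nat.sqrt t
    have hr : 1 ≤ r := Nat.le_sqrt.2 ht
    have hr2 : r ^ 2 ≤ t := Nat.sqrt_le' t
    have htr : (t : ℝ) ≤ r ^ 2 + 2 * r := by
      have := Nat.lt_succ_sqrt' t
      exact_mod_cast (by nlinarith : t ≤ r ^ 2 + 2 * r)
    have hdiff := abs_sum_range_sub_sum_range_le hD hr2
    push_cast at hdiff
    have hSt : |S t| ≤ |S (r ^ 2)| + 2 * r := by
      linarith [abs_sub_abs_le_abs_sub (S t) (S (r ^ 2))]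
    rw [Real.norm_eq_abs, abs_div, abs_div, Nat.abs_cast, Nat.abs_cast]
    push_cast
    calc |S t| / t ≤ (|S (r ^ 2)| + 2 * r) / r ^ 2 :=
          div_le_div₀ (by positivity) hSt (by positivity) (by exact_mod_cast hr2)
      _ = |S (r ^ 2)| / r ^ 2 + 2 / r := by field_simp
  refine squeeze_zero_norm' hbound ?_
  have hgap : Tendsto (fun t : ℕ => 2 / (Nat.sqrt t : ℝ)) atTop (𝓝 0) :=
    (tendsto_const_div_atTop_nhds_zero_nat 2).comp tendsto_natSqrt_atTop
  simpa using (hsq.comp tendsto_natSqrt_atTop).abs.add hgap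

lemma sum_add_sq_le_of_sum_eq_zero {ι : Type*} [Fintype ι] {c : ι → ℝ} (hc : ∑ j, c j = 0)
    (hc₁ : ∀ j, |c j| ≤ 1) (a : ℝ) :
    ∑ j, (a + c j) ^ 2 ≤ Fintype.card ι * a ^ 2 + Fintype.card ι := by
  have hsq : ∑ j, c j ^ 2 ≤ Fintype.card ι := by
    simpa using sum_le_sum fun j (_ : j ∈ univ) => (sq_le_one_iff_abs_le_one (c j)).2 (hc₁ j)
  calc ∑ j, (a + c j) ^ 2 = Fintype.card ι * a ^ 2 + 2 * a * ∑ j, c j + ∑ j, c j ^ 2 := by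
        simp only [add_sq, sum_add_distrib, sum_const, card_univ, nsmul_eq_mul, mul_sum]
    _ ≤ Fintype.card ι * a ^ 2 + Fintype.card ι := by rw [hc]; linarith

lemma EuclideanSpace.exists_norm_le_sqrt_card_mul_abs {ι : Type*} [Fintype ι] [Nonempty ι]
    (v : EuclideanSpace ℝ ι) : ∃ i, ‖v‖ ≤ √(Fintype.card ι) * |v i| := by
  obtain ⟨i, -, hi⟩ := exists_max_image univ (fun j => |v j|) univ_nonempty
  refine ⟨i, ?_⟩
  rw [EuclideanSpace.norm_eq, ← Real.sqrt_sq (abs_nonneg (v i)),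
    ← Real.sqrt_mul (Nat.cast_nonneg _)]
  gcongr
  simpa using sum_le_sum fun j (_ : j ∈ univ) =>
    pow_le_pow_left₀ (abs_nonneg _) (hi j (mem_univ j)) 2

lemma measurable_gradient {E : Type*} [NormedAddCommGroup E] [InnerProductSpace ℝ E]
    [CompleteSpace E] [MeasurableSpace E] [BorelSpace E] (f : E → ℝ) :
    Measurable (gradient f) :=
  (InnerProductSpace.toDual ℝ E).symm.continuous.measurable.comp (measurable_fderiv ℝ f)

section PredictableSampling

variable {ι : Type*}

def extendWord (i₀ : ι) {n : ℕ} (v : Fin n → ι) (k : ℕ) : ι :=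
  if h : k < n then v ⟨k, h⟩ else i₀

lemma extendWord_snoc_of_lt (i₀ : ι) {n : ℕ} (v : Fin n → ι) (j : ι) {k : ℕ} (hk : k < n) :
    extendWord i₀ (Fin.snoc v j : Fin (n + 1) → ι) k = extendWord i₀ v k := by
  simp [extendWord, hk, Nat.lt_succ_of_lt hk, Fin.snoc]

lemma extendWord_snoc_self (i₀ : ι) {n : ℕ} (v : Fin n → ι) (j : ι) :
    extendWord i₀ (Fin.snoc v j : Fin (n + 1) → ι) n = j := by
  simp [extendWord, Fin.snoc]

def IsPredictable {α : Type*} (g : ℕ → (ℕ → ι) → α) : Prop :=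
  ∀ t ω ω', (∀ k < t, ω k = ω' k) → g t ω = g t ω'

variable [Fintype ι]

def IsUniformOnCylinders [MeasurableSpace ι] (ℙ : Measure (ℕ → ι)) : Prop :=
  ∀ (n : ℕ) (js : Fin n → ι),
    ℙ {ω | ∀ k : Fin n, ω (k : ℕ) = js k} = (1 / (Fintype.card ι : ℝ≥0∞)) ^ n

/-- `𝔼[g t ω (ω t) | ω 0, …, ω (t - 1)]` when the letters are independent and uniform on `ι`. -/
def condMean (g : ℕ → (ℕ → ι) → ι → ℝ) (t : ℕ) (ω : ℕ → ι) : ℝ :=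
  (Fintype.card ι : ℝ)⁻¹ * ∑ j, g t ω j

def centeredSum (g : ℕ → (ℕ → ι) → ι → ℝ) (t : ℕ) (ω : ℕ → ι) : ℝ :=
  ∑ s ∈ range t, (g s ω (ω s) - condMean g s ω)

variable {g : ℕ → (ℕ → ι) → ι → ℝ}

lemma isPredictable_centeredSum (hg : IsPredictable g) : IsPredictable (centeredSum g) := by
  intro t ω ω' h
  refine sum_congr rfl fun s hs => ?_
  have hs : s < t := mem_range.1 hs
  rw [condMean, condMean, hg s ω ω' fun k hk => h k (hk.trans hs), h s hs]

lemma IsPredictable.centeredSum_succ (hg : IsPredictable g) {t : ℕ} {ω ω' : ℕ → ι}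
    (h : ∀ k < t, ω' k = ω k) :
    centeredSum g (t + 1) ω' = centeredSum g t ω + (g t ω (ω' t) - condMean g t ω) := by
  rw [centeredSum, sum_range_succ, ← centeredSum, isPredictable_centeredSum hg t ω' ω h,
    condMean, condMean, hg t ω' ω h]

variable [Nonempty ι]

lemma sum_sub_condMean (t : ℕ) (ω : ℕ → ι) : ∑ j, (g t ω j - condMean g t ω) = 0 := by
  have hcard : (Fintype.card ι : ℝ) ≠ 0 := Nat.cast_ne_zero.2 Fintype.card_ne_zero
  rw [sum_sub_distrib, sum_const, card_univ, nsmul_eq_mul, condMean,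
    mul_inv_cancel_left₀ hcard, sub_self]

lemma condMean_mem_Icc {t : ℕ} {ω : ℕ → ι} (hg : ∀ j, g t ω j ∈ Set.Icc (0 : ℝ) 1) :
    condMean g t ω ∈ Set.Icc (0 : ℝ) 1 := by
  have hcard : (0 : ℝ) < Fintype.card ι := Nat.cast_pos.2 Fintype.card_pos
  have hsum : ∑ j, g t ω j ≤ Fintype.card ι := by
    simpa using sum_le_sum fun j (_ : j ∈ univ) => (hg j).2
  refine ⟨mul_nonneg (inv_nonneg.2 hcard.le) (sum_nonneg fun j _ => (hg j).1), ?_⟩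
  rwa [condMean, inv_mul_le_iff₀ hcard, mul_one]

lemma abs_sub_condMean_le_one {t : ℕ} {ω : ℕ → ι} (hg : ∀ j, g t ω j ∈ Set.Icc (0 : ℝ) 1)
    (j : ι) : |g t ω j - condMean g t ω| ≤ 1 := by
  obtain ⟨hm₀, hm₁⟩ := condMean_mem_Icc hg
  obtain ⟨hg₀, hg₁⟩ := hg j
  exact abs_le.2 ⟨by linarith, by linarith⟩


lemma sum_sq_centeredSum_extendWord_le (hg : IsPredictable g)
    (hg₀₁ : ∀ t ω j, g t ω j ∈ Set.Icc (0 : ℝ) 1) (i₀ : ι) (t : ℕ) :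
    ∑ v : Fin t → ι, centeredSum g t (extendWord i₀ v) ^ 2 ≤ t * Fintype.card ι ^ t := by
  induction t with
  | zero => simp [centeredSum]
  | succ t ih =>
    set n : ℝ := (Fintype.card ι : ℝ)
    have hsnoc (w : Fin t → ι) (j : ι) :
        centeredSum g (t + 1) (extendWord i₀ (Fin.snoc w j : Fin (t + 1) → ι)) =
          centeredSum g t (extendWord i₀ w) +
            (g t (extendWord i₀ w) j - condMean g t (extendWord i₀ w)) := by
      rw [hg.centeredSum_succ fun k hk => extendWord_snoc_of_lt i₀ w j hk, extendWord_snoc_self]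
    calc ∑ v : Fin (t + 1) → ι, centeredSum g (t + 1) (extendWord i₀ v) ^ 2
        = ∑ w : Fin t → ι, ∑ j,
            centeredSum g (t + 1) (extendWord i₀ (Fin.snoc w j : Fin (t + 1) → ι)) ^ 2 := by
          rw [← (Fin.snocEquiv fun _ => ι).sum_comp, Fintype.sum_prod_type, sum_comm]
          rfl
      _ ≤ ∑ w : Fin t → ι, (n * centeredSum g t (extendWord i₀ w) ^ 2 + n) := by
          refine sum_le_sum fun w _ => ?_
          simp only [hsnoc]
          exact sum_add_sq_le_of_sum_eq_zero (sum_sub_condMean _ _)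
            (abs_sub_condMean_le_one (hg₀₁ _ _)) _
      _ = n * ∑ w : Fin t → ι, centeredSum g t (extendWord i₀ w) ^ 2 + n ^ t * n := by
          simp [sum_add_distrib, mul_sum, n]
      _ ≤ n * (t * n ^ t) + n ^ t * n := by gcongr
      _ = ((t + 1 : ℕ) : ℝ) * n ^ (t + 1) := by push_cast; ring

open Classical in
lemma card_le_abs_centeredSum_mul_sq_le (hg : IsPredictable g)
    (hg₀₁ : ∀ t ω j, g t ω j ∈ Set.Icc (0 : ℝ) 1) (i₀ : ι) (t : ℕ) {ε : ℝ} (hε : 0 ≤ ε) :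
    (#{v : Fin t → ι | ε ≤ |centeredSum g t (extendWord i₀ v)|} : ℝ) * ε ^ 2 ≤
      t * Fintype.card ι ^ t := by
  calc _ = ∑ v : Fin t → ι with ε ≤ |centeredSum g t (extendWord i₀ v)|, ε ^ 2 := by
        rw [sum_const, nsmul_eq_mul]
    _ ≤ ∑ v : Fin t → ι with ε ≤ |centeredSum g t (extendWord i₀ v)|,
          centeredSum g t (extendWord i₀ v) ^ 2 :=
        sum_le_sum fun v hv => by simpa using pow_le_pow_left₀ hε (mem_filter.1 hv).2 2
    _ ≤ ∑ v : Fin t → ι, centeredSum g t (extendWord i₀ v) ^ 2 :=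
        sum_le_sum_of_subset_of_nonneg (filter_subset _ _) fun _ _ _ => sq_nonneg _
    _ ≤ t * Fintype.card ι ^ t := sum_sq_centeredSum_extendWord_le hg hg₀₁ i₀ t

variable [MeasurableSpace ι] {ℙ : Measure (ℕ → ι)}

lemma measure_le_abs_centeredSum_le (hℙ : IsUniformOnCylinders ℙ) (hg : IsPredictable g)
    (hg₀₁ : ∀ t ω j, g t ω j ∈ Set.Icc (0 : ℝ) 1) (t : ℕ) {ε : ℝ} (hε : 0 < ε) :
    ℙ {ω | ε ≤ |centeredSum g t ω|} ≤ ENNReal.ofReal (t / ε ^ 2) := by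
  classical
  let i₀ : ι := Classical.arbitrary ι
  set S : Finset (Fin t → ι) := {v | ε ≤ |centeredSum g t (extendWord i₀ v)|}
  have hcover : {ω | ε ≤ |centeredSum g t ω|} ⊆ ⋃ v ∈ S, {ω | ∀ k : Fin t, ω k = v k} := by
    intro ω hω
    have hagree : ∀ k < t, extendWord i₀ (fun k : Fin t => ω k) k = ω k := fun k hk => by
      simp [extendWord, hk]
    refine Set.mem_biUnion (x := fun k : Fin t => ω k) ?_ fun k => rfl
    simpa [S, isPredictable_centeredSum hg t _ ω hagree] using hω
  have hn : (0 : ℝ) < Fintype.card ι := Nat.cast_pos.2 Fintype.card_pos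
  have hcount : (#S : ℝ) * (1 / Fintype.card ι) ^ t ≤ t / ε ^ 2 := by
    rw [le_div_iff₀ (by positivity), div_pow, one_pow, mul_one_div, div_mul_eq_mul_div,
      div_le_iff₀ (by positivity)]
    exact card_le_abs_centeredSum_mul_sq_le hg hg₀₁ i₀ t hε.le
  calc ℙ {ω | ε ≤ |centeredSum g t ω|} ≤ ∑ v ∈ S, ℙ {ω | ∀ k : Fin t, ω k = v k} :=
        (measure_mono hcover).trans (measure_biUnion_finset_le _ _)
    _ = ENNReal.ofReal (#S * (1 / Fintype.card ι) ^ t) := by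
        rw [sum_congr rfl fun v _ => hℙ t v, sum_const, nsmul_eq_mul,
          ENNReal.ofReal_mul (by positivity), ENNReal.ofReal_natCast,
          ENNReal.ofReal_pow (by positivity), ENNReal.ofReal_div_of_pos hn, ENNReal.ofReal_one,
          ENNReal.ofReal_natCast]
    _ ≤ ENNReal.ofReal (t / ε ^ 2) := ENNReal.ofReal_le_ofReal hcount

lemma measure_le_abs_centeredSum_div_le (hℙ : IsUniformOnCylinders ℙ) (hg : IsPredictable g)
    (hg₀₁ : ∀ t ω j, g t ω j ∈ Set.Icc (0 : ℝ) 1) (t : ℕ) {ε : ℝ} (hε : 0 < ε) :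
    ℙ {ω | ε ≤ |centeredSum g t ω / t|} ≤ ENNReal.ofReal (ε ^ 2)⁻¹ * ENNReal.ofReal (1 / t) := by
  rcases t.eq_zero_or_pos with rfl | ht
  · simp [hε.not_ge]
  have ht' : (0 : ℝ) < t := Nat.cast_pos.2 ht
  simp_rw [abs_div, Nat.abs_cast, le_div_iff₀ ht']
  refine (measure_le_abs_centeredSum_le hℙ hg hg₀₁ t (by positivity)).trans_eq ?_
  rw [← ENNReal.ofReal_mul (by positivity)]
  congr 1
  field_simp

lemma ae_tendsto_centeredSum_sq_div (hℙ : IsUniformOnCylinders ℙ) (hg : IsPredictable g)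
    (hg₀₁ : ∀ t ω j, g t ω j ∈ Set.Icc (0 : ℝ) 1) :
    ∀ᵐ ω ∂ℙ, Tendsto (fun r : ℕ => centeredSum g (r ^ 2) ω / (r ^ 2 : ℕ)) atTop (𝓝 0) := by
  have hsummable {ε : ℝ} (hε : 0 < ε) :
      ∑' r : ℕ, ℙ {ω | ε ≤ |centeredSum g (r ^ 2) ω / (r ^ 2 : ℕ)|} ≠ ∞ := by
    refine ne_top_of_le_ne_top ?_
      (ENNReal.tsum_le_tsum fun r => measure_le_abs_centeredSum_div_le hℙ hg hg₀₁ (r ^ 2) hε)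
    rw [ENNReal.tsum_mul_left, ← ENNReal.ofReal_tsum_of_nonneg (fun r => by positivity) (by simp)]
    exact ENNReal.mul_ne_top ENNReal.ofReal_ne_top ENNReal.ofReal_ne_top
  have hsmall (m : ℕ) : ∀ᵐ ω ∂ℙ, ∀ᶠ r in atTop,
      |centeredSum g (r ^ 2) ω / (r ^ 2 : ℕ)| < 1 / (m + 1) := by
    simpa using ae_eventually_notMem (hsummable (ε := 1 / (m + 1)) (by positivity))
  filter_upwards [ae_all_iff.2 hsmall] with ω hω
  refine Metric.tendsto_nhds.2 fun ε hε => ?_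
  obtain ⟨m, hm⟩ := exists_nat_one_div_lt hε
  filter_upwards [hω m] with r hr
  rw [Real.dist_0_eq_abs]
  exact hr.trans hm

theorem ae_tendsto_centeredSum_div (hℙ : IsUniformOnCylinders ℙ) (hg : IsPredictable g)
    (hg₀₁ : ∀ t ω j, g t ω j ∈ Set.Icc (0 : ℝ) 1) :
    ∀ᵐ ω ∂ℙ, Tendsto (fun t : ℕ => centeredSum g t ω / t) atTop (𝓝 0) := by
  filter_upwards [ae_tendsto_centeredSum_sq_div hℙ hg hg₀₁] with ω hω
  exact tendsto_sum_range_div_of_tendsto_sq (fun s => abs_sub_condMean_le_one (hg₀₁ s ω) _) hω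

theorem ae_le_liminf_average_of_le_condMean (hℙ : IsUniformOnCylinders ℙ)
    (hg : IsPredictable g) (hg₀₁ : ∀ t ω j, g t ω j ∈ Set.Icc (0 : ℝ) 1) {c : ℝ}
    (hc : ∀ t ω, c ≤ condMean g t ω) :
    ∀ᵐ ω ∂ℙ, c ≤ liminf (fun t : ℕ => (t : ℝ)⁻¹ * ∑ s ∈ range t, g s ω (ω s)) atTop := by
  filter_upwards [ae_tendsto_centeredSum_div hℙ hg hg₀₁] with ω hω
  have hlower : ∀ᶠ t : ℕ in atTop,
      c + centeredSum g t ω / t ≤ (t : ℝ)⁻¹ * ∑ s ∈ range t, g s ω (ω s) := by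
    filter_upwards [eventually_gt_atTop 0] with t ht
    have ht' : (0 : ℝ) < t := Nat.cast_pos.2 ht
    have hmean : t * c ≤ ∑ s ∈ range t, condMean g s ω := by
      simpa using sum_le_sum fun s (_ : s ∈ range t) => hc s ω
    rw [centeredSum, sum_sub_distrib, ← div_eq_inv_mul, add_div' _ _ _ ht'.ne',
      div_le_div_iff_of_pos_right ht']
    linarith
  have hupper (t : ℕ) : (t : ℝ)⁻¹ * ∑ s ∈ range t, g s ω (ω s) ≤ 1 := by
    rcases t.eq_zero_or_pos with rfl | ht
    · simp
    rw [inv_mul_le_iff₀ (Nat.cast_pos.2 ht), mul_one]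
    simpa using sum_le_sum fun s (_ : s ∈ range t) => (hg₀₁ s ω (ω s)).2
  have hlim : Tendsto (fun t : ℕ => c + centeredSum g t ω / t) atTop (𝓝 c) := by
    simpa using hω.const_add c
  calc c = liminf (fun t : ℕ => c + centeredSum g t ω / t) atTop := hlim.liminf_eq.symm
    _ ≤ _ := liminf_le_liminf hlower hlim.isBoundedUnder_ge
        (isCoboundedUnder_ge_of_le atTop hupper)

end PredictableSampling

section RCGD

variable {d : ℕ} (f : EuclideanSpace ℝ (Fin d) → ℝ) (α : ℝ)

/-- `goodStepIndicator d f α x₀ ω t` is `goodCoordIndicator f α x₀ t ω (ω t)` by definition. -/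
def goodCoordIndicator (x₀ : EuclideanSpace ℝ (Fin d)) (t : ℕ) (ω : ℕ → Fin d) (j : Fin d) :
    ℝ :=
  if 1 / √d * ‖gradient f (rcgdIter d f α x₀ ω t)‖ ≤ |gradient f (rcgdIter d f α x₀ ω t) j|
  then 1 else 0

lemma isPredictable_rcgdIter (x₀ : EuclideanSpace ℝ (Fin d)) :
    IsPredictable fun t ω => rcgdIter d f α x₀ ω t := by
  intro t ω ω' h
  induction t with
  | zero => rfl
  | succ t ih =>
    simp only [rcgdIter, ih fun k hk => h k (hk.trans t.lt_succ_self), h t t.lt_succ_self]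

lemma isPredictable_goodCoordIndicator (x₀ : EuclideanSpace ℝ (Fin d)) :
    IsPredictable (goodCoordIndicator f α x₀) := by
  intro t ω ω' h
  ext j
  simp only [goodCoordIndicator, isPredictable_rcgdIter f α x₀ t ω ω' h]

lemma goodCoordIndicator_mem_Icc (x₀ : EuclideanSpace ℝ (Fin d)) (t : ℕ) (ω : ℕ → Fin d)
    (j : Fin d) : goodCoordIndicator f α x₀ t ω j ∈ Set.Icc (0 : ℝ) 1 := by
  unfold goodCoordIndicator
  split_ifs <;> simp

lemma inv_le_condMean_goodCoordIndicator [NeZero d] (x₀ : EuclideanSpace ℝ (Fin d)) (t : ℕ)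
    (ω : ℕ → Fin d) : (d : ℝ)⁻¹ ≤ condMean (goodCoordIndicator f α x₀) t ω := by
  obtain ⟨i, hi⟩ :=
    EuclideanSpace.exists_norm_le_sqrt_card_mul_abs (gradient f (rcgdIter d f α x₀ ω t))
  have hgood : goodCoordIndicator f α x₀ t ω i = 1 := by
    rw [Fintype.card_fin] at hi
    rw [goodCoordIndicator, if_pos]
    rwa [one_div, inv_mul_le_iff₀ (Real.sqrt_pos.2 (Nat.cast_pos.2 (NeZero.pos d)))]
  rw [condMean, Fintype.card_fin]
  refine le_mul_of_one_le_right (by positivity) (hgood.symm.le.trans ?_)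
  exact single_le_sum (fun j _ => (goodCoordIndicator_mem_Icc f α x₀ t ω j).1) (mem_univ i)

theorem ae_le_liminf_goodStep_average [NeZero d] {ℙ : Measure (ℕ → Fin d)}
    (hℙ : IsUniformOnCylinders ℙ) (x₀ : EuclideanSpace ℝ (Fin d)) :
    ∀ᵐ ω ∂ℙ, 1 / (d : ℝ) ≤
      liminf (fun t : ℕ => (t : ℝ)⁻¹ * ∑ s ∈ range t, goodStepIndicator d f α x₀ ω s) atTop := by
  rw [one_div]
  exact ae_le_liminf_average_of_le_condMean hℙ (isPredictable_goodCoordIndicator f α x₀)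
    (goodCoordIndicator_mem_Icc f α x₀) (inv_le_condMean_goodCoordIndicator f α x₀)

lemma measurable_gradient_apply :
    Measurable fun q : EuclideanSpace ℝ (Fin d) × Fin d => gradient f q.1 q.2 :=
  measurable_from_prod_countable_left fun i =>
    (EuclideanSpace.proj i).continuous.measurable.comp (measurable_gradient f)

lemma measurable_rcgdIter (t : ℕ) :
    Measurable fun p : EuclideanSpace ℝ (Fin d) × (ℕ → Fin d) => rcgdIter d f α p.1 p.2 t := by
  induction t with
  | zero => exact measurable_fst
  | succ t ih =>
    have hstep : Measurable fun q : EuclideanSpace ℝ (Fin d) × Fin d =>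
        q.1 - (α * gradient f q.1 q.2) • EuclideanSpace.single q.2 (1 : ℝ) :=
      measurable_fst.sub ((measurable_const.mul (measurable_gradient_apply f)).smul
        ((measurable_of_finite fun i : Fin d => EuclideanSpace.single i (1 : ℝ)).comp
          measurable_snd))
    exact hstep.comp (ih.prodMk ((measurable_pi_apply t).comp measurable_snd))

lemma measurable_goodStepIndicator (t : ℕ) :
    Measurable fun p : EuclideanSpace ℝ (Fin d) × (ℕ → Fin d) =>
      goodStepIndicator d f α p.1 p.2 t := by
  have hx := measurable_rcgdIter f α t
  have hcoord := (measurable_gradient_apply f).comp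
    (hx.prodMk ((measurable_pi_apply t).comp measurable_snd))
  exact Measurable.ite (measurableSet_le (measurable_const.mul
    ((measurable_gradient f).comp hx).norm) hcoord.abs) measurable_const measurable_const

end RCGD

theorem rcgd_good_steps_frequency_general
    {d : ℕ} (hd : 1 ≤ d) (f : EuclideanSpace ℝ (Fin d) → ℝ) (α : ℝ)
    (ℙ : Measure (ℕ → Fin d))
    (hℙ : ∀ (n : ℕ) (js : Fin n → Fin d),
      ℙ {ω | ∀ k : Fin n, ω (k : ℕ) = js k} = (1 / (d : ENNReal)) ^ n) :
    ((volume : Measure (EuclideanSpace ℝ (Fin d))).prod ℙ)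
      {p : EuclideanSpace ℝ (Fin d) × (ℕ → Fin d) |
        ¬ (1 / (d : ℝ)) ≤ liminf (fun t : ℕ => (t : ℝ)⁻¹ *
            ∑ s ∈ Finset.range t, goodStepIndicator d f α p.1 p.2 s) atTop} = 0 := by
  have : NeZero d := ⟨by omega⟩
  have hunif : IsUniformOnCylinders ℙ := fun n js => by simpa using hℙ n js
  have hmeas : Measurable fun p : EuclideanSpace ℝ (Fin d) × (ℕ → Fin d) =>
      liminf (fun t : ℕ => (t : ℝ)⁻¹ * ∑ s ∈ range t, goodStepIndicator d f α p.1 p.2 s) atTop :=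
    Measurable.liminf fun t => measurable_const.mul
      (Finset.measurable_sum _ fun s _ => measurable_goodStepIndicator f α s)
  refine Measure.measure_prod_null_of_ae_null (measurableSet_le measurable_const hmeas).compl
    (Eventually.of_forall fun x₀ => ?_)
  exact ae_iff.1 (ae_le_liminf_goodStep_average f α hunif x₀)

/-- The set `Θ₁` of pairs `(x₀, ω)` along which the good steps have lower asymptotic
frequency at least `1/d` is of full `μ = Leb × ℙ` measure. -/
theorem rcgd_good_steps_frequency
    {d : ℕ} (hd : 1 ≤ d) (f : EuclideanSpace ℝ (Fin d) → ℝ) (α : ℝ)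
    (hf : ContDiff ℝ 2 f) (hα : 0 < α)
    (ℙ : Measure (ℕ → Fin d))
    (hℙ : ∀ (n : ℕ) (js : Fin n → Fin d),
      ℙ {ω | ∀ k : Fin n, ω (k : ℕ) = js k} = (1 / (d : ENNReal)) ^ n) :
    ((volume : Measure (EuclideanSpace ℝ (Fin d))).prod ℙ)
      {p : EuclideanSpace ℝ (Fin d) × (ℕ → Fin d) |
        ¬ (1 / (d : ℝ)) ≤ liminf (fun t : ℕ => (t : ℝ)⁻¹ *
            ∑ s ∈ Finset.range t, goodStepIndicator d f α p.1 p.2 s) atTop} = 0 :=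
  rcgd_good_steps_frequency_general hd f α ℙ hℙ
end
end

section
/- Let H ∈ ℝ^{d×d} be symmetric, let f^H(x) := (1/2) xᵀHx, and for ρ^H > 0 set U₂^H := ⋃_{x : f^H(x)=0} B(x, ρ^H‖x‖) (open Euclidean balls). Then there exist constants p₊ > 0 and p₋ < 0 such that for every x ∈ ℝ^d \ U₂^H: (i) if f^H(x) ≥ 0 then f^H(x) ≥ p₊‖x‖², and (ii) if f^H(x) ≤ 0 then f^H(x) ≤ p₋‖x‖². -/
open Filter Topology

noncomputable section

/-- The quadratic form `f^H(x) = (1/2) xᵀ H x` on Euclidean space. -/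
def quadForm (d : ℕ) (H : Matrix (Fin d) (Fin d) ℝ) (x : EuclideanSpace ℝ (Fin d)) : ℝ :=
  (1 / 2 : ℝ) * ∑ i : Fin d, ∑ j : Fin d, x i * H i j * x j

lemma quadForm_smul (d : ℕ) (H : Matrix (Fin d) (Fin d) ℝ) (t : ℝ)
    (x : EuclideanSpace ℝ (Fin d)) : quadForm d H (t • x) = t ^ 2 * quadForm d H x := by
  have h : ∀ i j : Fin d, (t • x) i * H i j * (t • x) j = t ^ 2 * (x i * H i j * x j) := by
    intro i j
    simp [PiLp.smul_apply, smul_eq_mul]; ring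
  simp_rw [quadForm, h, ← Finset.mul_sum]
  ring

lemma quadForm_neg (d : ℕ) (H : Matrix (Fin d) (Fin d) ℝ)
    (x : EuclideanSpace ℝ (Fin d)) : quadForm d (-H) x = - quadForm d H x := by
  have h : ∀ i j : Fin d, x i * (-H) i j * x j = -(x i * H i j * x j) := by
    intro i j; rw [Matrix.neg_apply]; ring
  simp_rw [quadForm, h, Finset.sum_neg_distrib]
  ring

lemma quadForm_continuous (d : ℕ) (H : Matrix (Fin d) (Fin d) ℝ) :
    Continuous (quadForm d H) := by
  unfold quadForm
  refine continuous_const.mul (continuous_finset_sum _ fun i _ => continuous_finset_sum _ fun j _ => ?_)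
  exact (((EuclideanSpace.proj i).continuous.mul continuous_const).mul (EuclideanSpace.proj j).continuous)

lemma mem_U_iff (d : ℕ) (H : Matrix (Fin d) (Fin d) ℝ) (ρ : ℝ) (x : EuclideanSpace ℝ (Fin d)) :
    x ∈ (⋃ y ∈ {y : EuclideanSpace ℝ (Fin d) | quadForm d H y = 0}, Metric.ball y (ρ * ‖y‖)) ↔
    ∃ y, quadForm d H y = 0 ∧ dist x y < ρ * ‖y‖ := by
  simp [Metric.mem_ball]

lemma mem_U_smul (d : ℕ) (H : Matrix (Fin d) (Fin d) ℝ) (ρ : ℝ) {t : ℝ} (ht : 0 < t)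
    (x : EuclideanSpace ℝ (Fin d))
    (hx : (t • x) ∈ (⋃ y ∈ {y : EuclideanSpace ℝ (Fin d) | quadForm d H y = 0}, Metric.ball y (ρ * ‖y‖))) :
    x ∈ (⋃ y ∈ {y : EuclideanSpace ℝ (Fin d) | quadForm d H y = 0}, Metric.ball y (ρ * ‖y‖)) := by
  rw [mem_U_iff] at hx ⊢
  obtain ⟨y, hy0, hyd⟩ := hx
  refine ⟨t⁻¹ • y, ?_, ?_⟩
  · rw [quadForm_smul, hy0, mul_zero]
  · have h1 : dist x (t⁻¹ • y) = t⁻¹ * dist (t • x) y := by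
      rw [dist_eq_norm, dist_eq_norm, ← norm_smul_of_nonneg (by positivity : (0:ℝ) ≤ t⁻¹),
        smul_sub, smul_smul, inv_mul_cancel₀ ht.ne', one_smul]
    rw [h1, norm_smul, Real.norm_eq_abs, abs_of_pos (by positivity)]
    rw [show ρ * (t⁻¹ * ‖y‖) = t⁻¹ * (ρ * ‖y‖) by ring]
    exact mul_lt_mul_of_pos_left hyd (by positivity)

lemma one_sided (d : ℕ) (H : Matrix (Fin d) (Fin d) ℝ) (ρ : ℝ) (hρ : 0 < ρ) :
    ∃ pp > (0 : ℝ),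
      ∀ x : EuclideanSpace ℝ (Fin d),
        x ∉ (⋃ y ∈ {y : EuclideanSpace ℝ (Fin d) | quadForm d H y = 0},
          Metric.ball y (ρ * ‖y‖)) →
        (0 ≤ quadForm d H x → pp * ‖x‖ ^ 2 ≤ quadForm d H x) := by
  set U := (⋃ y ∈ {y : EuclideanSpace ℝ (Fin d) | quadForm d H y = 0}, Metric.ball y (ρ * ‖y‖)) with hU
  set f := quadForm d H with hf
  set K := Metric.sphere (0 : EuclideanSpace ℝ (Fin d)) 1 ∩ Uᶜ ∩ {x | 0 ≤ f x} with hK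
  have hUopen : IsOpen U := isOpen_biUnion fun y _ => Metric.isOpen_ball
  have hKclosed : IsClosed K :=
    ((Metric.isClosed_sphere.inter hUopen.isClosed_compl).inter (isClosed_le continuous_const (quadForm_continuous d H)))
  have hKbdd : Bornology.IsBounded K :=
    (Metric.isBounded_sphere).subset (fun x hx => hx.1.1)
  have hKcpt : IsCompact K := Metric.isCompact_of_isClosed_isBounded hKclosed hKbdd
  -- normalization: x ∉ U, x ≠ 0, 0 ≤ f x  implies  ‖x‖⁻¹ • x ∈ K
  have hnorm : ∀ x : EuclideanSpace ℝ (Fin d), x ∉ U → x ≠ 0 → 0 ≤ f x → (‖x‖⁻¹ • x) ∈ K := by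
    intro x hxU hx0 hfx
    have hxn : (0:ℝ) < ‖x‖ := norm_pos_iff.mpr hx0
    refine ⟨⟨?_, ?_⟩, ?_⟩
    · simp [norm_smul, abs_of_pos (inv_pos.mpr hxn), inv_mul_cancel₀ hxn.ne']
    · intro hmem
      exact hxU (mem_U_smul d H ρ (inv_pos.mpr hxn) x hmem)
    · show 0 ≤ f (‖x‖⁻¹ • x)
      rw [hf, quadForm_smul]
      positivity
  -- positivity of f on K
  have hpos : ∀ u ∈ K, 0 < f u := by
    intro u hu
    have h2 : 0 ≤ f u := hu.2
    rcases lt_or_eq_of_le h2 with h | h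
    · exact h
    · exfalso
      apply hu.1.2
      rw [mem_U_iff]
      refine ⟨u, h.symm, ?_⟩
      have : ‖u‖ = 1 := by simpa using hu.1.1
      simp [this, hρ]
  by_cases hKne : K.Nonempty
  · obtain ⟨u, huK, humin⟩ := hKcpt.exists_isMinOn hKne (quadForm_continuous d H).continuousOn
    refine ⟨f u, hpos u huK, ?_⟩
    intro x hxU hfx
    rcases eq_or_ne x 0 with rfl | hx0
    · simp [hf, quadForm]
    · have hxn : (0:ℝ) < ‖x‖ := norm_pos_iff.mpr hx0
      have hu' := hnorm x hxU hx0 hfx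
      have h1 : f u ≤ f (‖x‖⁻¹ • x) := humin hu'
      have h2 : f (‖x‖⁻¹ • x) = ‖x‖⁻¹ ^ 2 * f x := quadForm_smul d H _ x
      rw [h2] at h1
      have := mul_le_mul_of_nonneg_left h1 (by positivity : (0:ℝ) ≤ ‖x‖ ^ 2)
      calc f u * ‖x‖ ^ 2 = ‖x‖ ^ 2 * f u := by ring
        _ ≤ ‖x‖ ^ 2 * (‖x‖⁻¹ ^ 2 * f x) := this
        _ = f x := by field_simp
  · refine ⟨1, one_pos, ?_⟩
    intro x hxU hfx
    rcases eq_or_ne x 0 with rfl | hx0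
    · simp [hf, quadForm]
    · exact absurd ⟨_, hnorm x hxU hx0 hfx⟩ hKne

/-- Away from the conic neighborhood `U₂^H = ⋃_{f^H(x)=0} B(x, ρ^H ‖x‖)` of the zero set of the
quadratic form `f^H`, one has `f^H(x) ≥ p₊‖x‖²` where `f^H ≥ 0`, and `f^H(x) ≤ p₋‖x‖²`
where `f^H ≤ 0`. -/
theorem quadratic_form_bounds_off_zero_cone
    {d : ℕ} (H : Matrix (Fin d) (Fin d) ℝ) (hsymm : H.IsSymm)
    (ρH : ℝ) (hρH : 0 < ρH) :
    ∃ pp > (0 : ℝ), ∃ pm < (0 : ℝ),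
      ∀ x : EuclideanSpace ℝ (Fin d),
        x ∉ (⋃ y ∈ {y : EuclideanSpace ℝ (Fin d) | quadForm d H y = 0},
          Metric.ball y (ρH * ‖y‖)) →
        (0 ≤ quadForm d H x → pp * ‖x‖ ^ 2 ≤ quadForm d H x) ∧
        (quadForm d H x ≤ 0 → quadForm d H x ≤ pm * ‖x‖ ^ 2) := by
  obtain ⟨pp, hpp, hPP⟩ := one_sided d H ρH hρH
  obtain ⟨pq, hpq, hPQ⟩ := one_sided d (-H) ρH hρH
  have hUeq : (⋃ y ∈ {y : EuclideanSpace ℝ (Fin d) | quadForm d (-H) y = 0},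
      Metric.ball y (ρH * ‖y‖)) = (⋃ y ∈ {y : EuclideanSpace ℝ (Fin d) | quadForm d H y = 0},
      Metric.ball y (ρH * ‖y‖)) := by
    apply Set.iUnion_congr
    intro y
    simp [quadForm_neg, neg_eq_zero]
  refine ⟨pp, hpp, -pq, neg_neg_iff_pos.mpr hpq, ?_⟩
  intro x hx
  refine ⟨hPP x hx, ?_⟩
  intro hle
  have := hPQ x (by rw [hUeq]; exact hx) (by rw [quadForm_neg]; linarith)
  rw [quadForm_neg] at this
  linarith
end
end
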